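/- arXiv:2603.06419 — 6 statements merged into one kernel-verified Lean document; each statement's English description precedes it below -/
import Mathlib

section
/- Let H be a continuous linear operator on a finite-dimensional complex inner product space E, and for X a continuous linear operator on E define the γ-dynamics γ^t(X) = exp(itH†) X exp(−itH) and the map δ_γ(X) = i(H†X − XH), where H† denotes the adjoint of H. Then the following are equivalent: (1) δ_γ(1) = 0; (2) H = H†; (3) γ^t(1) = 1 for all t ∈ ℝ; (4) γ^t(XY) = γ^t(X)γ^t(Y) for all t ∈ ℝ and all operators X, Y; (5) δ_γ satisfies the Leibniz rule δ_γ(XY) = δ_γ(X)Y + Xδ_γ(Y) for all operators X, Y. -/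
open ContinuousLinearMap NormedSpace

/-!
`γ^t(1) = exp(itH†) exp(-itH)`, so `γ^t(1) = 1` says `exp(itH†) = exp(itH)` for all real `t`;
differentiating at `t = 0` gives `H† = H`. Conversely, for `H = H†` the map `γ^t` is conjugation
by a unit, hence multiplicative, and `δ_γ` is the inner derivation `i[H, ·]`. A multiplicative
`γ^t` fixes `1` because `γ^t(1)` is an idempotent unit, and the Leibniz rule at `X = Y = 1`
forces `δ_γ(1) = i(H† - H) = 0`.
-/

section ExpConj

variable {𝔸 : Type*} [NormedRing 𝔸] [NormedAlgebra ℚ 𝔸] [CompleteSpace 𝔸]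

theorem NormedSpace.exp_neg_mul_exp (x : 𝔸) : exp (-x) * exp x = 1 := by
  rw [← exp_add_of_commute (Commute.refl x).neg_left, neg_add_cancel, exp_zero]

theorem NormedSpace.exp_mul_exp_neg (x : 𝔸) : exp x * exp (-x) = 1 := by
  rw [← exp_add_of_commute (Commute.refl x).neg_right, add_neg_cancel, exp_zero]

theorem NormedSpace.exp_mul_exp_neg_eq_one_iff (x y : 𝔸) :
    exp x * exp (-y) = 1 ↔ exp x = exp y := by
  constructor
  · intro h
    calc exp x = exp x * exp (-y) * exp y := by rw [mul_assoc, exp_neg_mul_exp, mul_one]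
      _ = exp y := by rw [h, one_mul]
  · intro h
    rw [h, exp_mul_exp_neg]

theorem NormedSpace.exp_mul_mul_mul_exp_neg (x X Y : 𝔸) :
    exp x * (X * Y) * exp (-x) = exp x * X * exp (-x) * (exp x * Y * exp (-x)) := by
  calc exp x * (X * Y) * exp (-x) = exp x * X * (exp (-x) * exp x) * Y * exp (-x) := by
        rw [exp_neg_mul_exp, mul_one, mul_assoc (exp x) X Y]
    _ = exp x * X * exp (-x) * (exp x * Y * exp (-x)) := by noncomm_ring

end ExpConj

section ExpIMulSmul

variable {𝔸 : Type*} [NormedRing 𝔸] [NormedAlgebra ℂ 𝔸] [CompleteSpace 𝔸]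

theorem NormedSpace.hasDerivAt_exp_I_mul_smul (c : 𝔸) :
    HasDerivAt (fun t : ℝ => exp ((Complex.I * t) • c)) (Complex.I • c) 0 := by
  have := (hasDerivAt_exp_smul_const (Complex.I • c) (0 : ℂ)).scomp_of_eq (0 : ℝ)
    Complex.ofRealCLM.hasDerivAt (by simp)
  simpa [Function.comp_def, smul_smul, mul_comm] using this

theorem NormedSpace.eq_of_forall_exp_I_mul_smul_eq {a b : 𝔸}
    (h : ∀ t : ℝ, exp ((Complex.I * t) • a) = exp ((Complex.I * t) • b)) : a = b :=
  smul_right_injective 𝔸 Complex.I_ne_zero <| (hasDerivAt_exp_I_mul_smul a).unique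
    ((hasDerivAt_exp_I_mul_smul b).congr_of_eventuallyEq (.of_forall h))

end ExpIMulSmul

theorem smul_commutator_mul {R A : Type*} [CommRing R] [Ring A] [Algebra R A] (c : R)
    (a X Y : A) :
    c • (a * (X * Y) - X * Y * a) = c • (a * X - X * a) * Y + X * c • (a * Y - Y * a) := by
  rw [smul_mul_assoc, mul_smul_comm, ← smul_add]
  congr 1
  noncomm_ring

/-- For the γ-dynamics `γ^t(X) = exp(itH†) X exp(−itH)` and the map
`δ_γ(X) = i(H†X − XH)`, the following are equivalent:
(1) `δ_γ(1) = 0`; (2) `H = H†`; (3) `γ^t(1) = 1` for all `t`;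
(4) `γ^t` is multiplicative for all `t`; (5) `δ_γ` satisfies the Leibniz rule. -/
theorem gamma_dynamics_tfae
    {E : Type*} [NormedAddCommGroup E] [InnerProductSpace ℂ E] [FiniteDimensional ℂ E]
    (H : E →L[ℂ] E)
    (γ : ℝ → (E →L[ℂ] E) → (E →L[ℂ] E))
    (hγ : ∀ (t : ℝ) (X : E →L[ℂ] E),
      γ t X = exp ((Complex.I * t) • adjoint H) * X * exp (-(Complex.I * t) • H))
    (δ : (E →L[ℂ] E) → (E →L[ℂ] E))
    (hδ : ∀ X : E →L[ℂ] E, δ X = Complex.I • (adjoint H * X - X * H)) :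
    [δ 1 = 0,
     H = adjoint H,
     ∀ t : ℝ, γ t 1 = 1,
     ∀ (t : ℝ) (X Y : E →L[ℂ] E), γ t (X * Y) = γ t X * γ t Y,
     ∀ X Y : E →L[ℂ] E, δ (X * Y) = δ X * Y + X * δ Y].TFAE := by
  -- the lemmas on `exp` need a `ℚ`-algebra structure, which is not found by instance search here
  let : NormedAlgebra ℚ (E →L[ℂ] E) := .restrictScalars ℚ ℂ _
  simp only [neg_smul] at hγ
  tfae_have 1 ↔ 2 := by
    rw [hδ, mul_one, one_mul, smul_eq_zero_iff_right Complex.I_ne_zero, sub_eq_zero, eq_comm]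
  tfae_have 2 → 4 := by
    intro hH t X Y
    rw [hγ, hγ, hγ, ← hH, exp_mul_mul_mul_exp_neg]
  tfae_have 4 → 3 := by
    intro hmul t
    have hunit : IsUnit (γ t 1) := by
      rw [hγ, mul_one]
      exact (isUnit_exp _).mul (isUnit_exp _)
    exact (IsIdempotentElem.iff_eq_one_of_isUnit hunit).mp
      (by rw [IsIdempotentElem, ← hmul, mul_one])
  tfae_have 3 → 2 := fun hfix => Eq.symm <| eq_of_forall_exp_I_mul_smul_eq fun t => by
    rw [← exp_mul_exp_neg_eq_one_iff, ← hfix t, hγ, mul_one]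
  tfae_have 2 → 5 := by
    intro hH X Y
    simp only [hδ, ← hH, smul_commutator_mul]
  tfae_have 5 → 1 := fun hleib => by
    simpa using hleib 1 1
  tfae_finish
end

section
/- Let H₀ and H be continuous linear operators on a finite-dimensional complex inner product space E with H₀ self-adjoint, and suppose H = R H₀ R⁻¹ for some invertible continuous linear operator R such that H₀ commutes with R†R. Then exp(itH†) exp(−itH) = 1 for all t ∈ ℝ; in particular ‖exp(−itH)ψ₀‖ = ‖ψ₀‖ for every ψ₀ ∈ E and every t ∈ ℝ. -/
/-!
The hypotheses force `H` to be self-adjoint: conjugating a self-adjoint element by a unit `u`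
gives `star u⁻¹ * H₀ * star u`, and this equals `u * H₀ * u⁻¹` exactly when `H₀` commutes with
`star u * u`. Then `-(i t) • H` is skew-adjoint for real `t`, so its exponential is unitary.
-/

open ContinuousLinearMap NormedSpace

theorem IsSelfAdjoint.units_conj_of_commute_star_mul_self {M : Type*} [Monoid M] [StarMul M]
    {a : M} (ha : IsSelfAdjoint a) (u : Mˣ) (h : Commute a (star ↑u * ↑u)) :
    IsSelfAdjoint (↑u * a * ↑u⁻¹ : M) := by
  have hstar : star (↑u⁻¹ : M) * star ↑u = 1 := by rw [← star_mul, u.mul_inv, star_one]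
  calc star (↑u * a * ↑u⁻¹ : M) = star (↑u⁻¹ : M) * a * (star ↑u * ↑u) * ↑u⁻¹ := by
        rw [star_mul, star_mul, ha.star_eq]; simp only [mul_assoc, u.mul_inv, mul_one]
    _ = star (↑u⁻¹ : M) * (star ↑u * ↑u) * a * ↑u⁻¹ := by rw [mul_assoc _ a, h.eq, ← mul_assoc]
    _ = ↑u * a * ↑u⁻¹ := by rw [← mul_assoc _ (star _), hstar, one_mul]

/-- If `H = R H₀ R⁻¹` with `H₀` self-adjoint and `[H₀, R†R] = 0`, then
`exp(itH†) exp(−itH) = 1` for all `t`; in particular the evolution `exp(−itH)`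
preserves the norm of every vector. -/
theorem exp_adjoint_mul_exp_eq_one_of_similar_selfAdjoint
    {E : Type*} [NormedAddCommGroup E] [InnerProductSpace ℂ E] [FiniteDimensional ℂ E]
    (H₀ H R R' : E →L[ℂ] E)
    (hH₀ : IsSelfAdjoint H₀)
    (hRR' : R * R' = 1) (hR'R : R' * R = 1)
    (hH : H = R * H₀ * R')
    (hcomm : H₀ * (adjoint R * R) = (adjoint R * R) * H₀) :
    (∀ t : ℝ, exp ((Complex.I * t) • adjoint H) * exp (-(Complex.I * t) • H) = 1) ∧
    (∀ (ψ₀ : E) (t : ℝ), ‖exp (-(Complex.I * t) • H) ψ₀‖ = ‖ψ₀‖) := by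
  let : NormedAlgebra ℚ (E →L[ℂ] E) := .restrictScalars ℚ ℂ (E →L[ℂ] E)
  have hH_sa : IsSelfAdjoint H :=
    hH ▸ hH₀.units_conj_of_commute_star_mul_self ⟨R, R', hRR', hR'R⟩ hcomm
  have hU (t : ℝ) : exp (-(Complex.I * t) • H) ∈ unitary (E →L[ℂ] E) :=
    exp_mem_unitary_of_mem_skewAdjoint <| hH_sa.smul_mem_skewAdjoint <| by
      simp [skewAdjoint.mem_iff]
  have hstar (t : ℝ) :
      star (exp (-(Complex.I * t) • H)) = exp ((Complex.I * t) • adjoint H) := by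
    simp [star_exp, star_smul, ← star_eq_adjoint]
  exact ⟨fun t ↦ hstar t ▸ Unitary.star_mul_self_of_mem (hU t),
    fun ψ₀ t ↦ norm_map_of_mem_unitary (hU t) ψ₀⟩
end

section
/- Let H be a continuous linear operator on a finite-dimensional complex inner product space E, let ψ₀ ∈ E be nonzero, set Ψ(t) = exp(−itH)ψ₀ (which is nonzero for all t since exp(−itH) is invertible), and let Ψ̂(t) = Ψ(t)/‖Ψ(t)‖. Then for every t ∈ ℝ the map t ↦ Ψ̂(t) is differentiable at t and satisfies the nonlinear Schrödinger equation i dΨ̂/dt = H Ψ̂(t) + (1/2)⟨Ψ̂(t), (H† − H)Ψ̂(t)⟩ · Ψ̂(t). -/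
open ContinuousLinearMap NormedSpace

/-!
`Ψ` solves the linear equation `i Ψ' = H Ψ` and never vanishes, since `exp(−itH)` is invertible.
The quotient rule gives `Ψ̂' = ‖Ψ‖⁻¹ (Ψ' − Re⟪Ψ̂, Ψ'⟫ Ψ̂)`: normalizing removes the radial part of
the velocity. For `Ψ' = −i H Ψ` this radial part is `‖Ψ‖ Im⟪Ψ̂, H Ψ̂⟫ Ψ̂`, and the identity
`⟪Ψ̂, (H† − H) Ψ̂⟫ = −2i Im⟪Ψ̂, H Ψ̂⟫` turns it into the nonlinear term.
-/

section
open scoped RealInnerProductSpace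

variable {F : Type*} [NormedAddCommGroup F] [InnerProductSpace ℝ F] {f : ℝ → F} {f' : F} {t : ℝ}

theorem HasDerivAt.norm (hf : HasDerivAt f f' t) (h0 : f t ≠ 0) :
    HasDerivAt (‖f ·‖) (⟪f t, f'⟫ / ‖f t‖) t := by
  have hsqrt := hf.norm_sq.sqrt (by positivity)
  simp only [Real.sqrt_sq (norm_nonneg _)] at hsqrt
  convert hsqrt using 1
  field_simp

theorem HasDerivAt.inv_norm_smul (hf : HasDerivAt f f' t) (h0 : f t ≠ 0) :
    HasDerivAt (fun s => ‖f s‖⁻¹ • f s) (‖f t‖⁻¹ • f' - (⟪f t, f'⟫ / ‖f t‖ ^ 3) • f t) t := by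
  refine (((hf.norm h0).inv (norm_ne_zero_iff.mpr h0)).smul hf).congr_deriv ?_
  rw [sub_eq_add_neg, ← neg_smul]
  congr 2
  field_simp
end

theorem hasDerivAt_exp_smul_apply {E : Type*} [NormedAddCommGroup E] [NormedSpace ℂ E]
    [CompleteSpace E] (A : E →L[ℂ] E) (x : E) (t : ℝ) :
    HasDerivAt (fun s : ℝ => exp (s • A) x) (A (exp (t • A) x)) t := by
  have h := (apply ℂ E x).restrictScalars ℝ |>.hasFDerivAt.comp_hasDerivAt t
    (hasDerivAt_exp_smul_const' A t)
  simpa [Function.comp_def] using h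

theorem exp_apply_ne_zero {𝕜 E : Type*} [RCLike 𝕜] [NormedAddCommGroup E] [NormedSpace 𝕜 E]
    [CompleteSpace E] (A : E →L[𝕜] E) {x : E} (hx : x ≠ 0) : exp A x ≠ 0 := by
  have hunit := isUnit_exp_of_mem_ball (𝕂 := 𝕜) (x := A)
    ((expSeries_radius_eq_top 𝕜 (E →L[𝕜] E)).symm ▸ edist_lt_top _ _)
  exact (isUnit_iff_bijective.mp hunit).injective.ne_iff' (map_zero _) |>.mpr hx

theorem inner_adjoint_sub_self_apply {E : Type*} [NormedAddCommGroup E] [InnerProductSpace ℂ E]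
    [CompleteSpace E] (H : E →L[ℂ] E) (x : E) :
    inner ℂ x ((adjoint H - H) x) = -(2 * (inner ℂ x (H x)).im) * Complex.I := by
  rw [sub_apply, inner_sub_right, adjoint_inner_right, ← inner_conj_symm (H x) x]
  rw [← neg_sub, Complex.sub_conj]
  push_cast
  ring

theorem exists_hasDerivAt_inv_norm_smul_of_schrodinger {E : Type*} [NormedAddCommGroup E]
    [InnerProductSpace ℂ E] [CompleteSpace E] (H : E →L[ℂ] E) {Ψ : ℝ → E} {t : ℝ}
    (hΨ : HasDerivAt Ψ (-Complex.I • H (Ψ t)) t) (h0 : Ψ t ≠ 0) :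
    ∃ d : E, HasDerivAt (fun s => ‖Ψ s‖⁻¹ • Ψ s) d t ∧
      Complex.I • d = H (‖Ψ t‖⁻¹ • Ψ t)
        + ((1 / 2 : ℂ) * inner ℂ (‖Ψ t‖⁻¹ • Ψ t) ((adjoint H - H) (‖Ψ t‖⁻¹ • Ψ t))) •
          (‖Ψ t‖⁻¹ • Ψ t) := by
  -- the derivative of `‖Ψ‖` is computed in the underlying real inner product space
  let := InnerProductSpace.complexToReal (G := E)
  refine ⟨_, hΨ.inv_norm_smul h0, ?_⟩
  have hre : inner ℝ (Ψ t) (-Complex.I • H (Ψ t)) = (inner ℂ (Ψ t) (H (Ψ t))).im := by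
    simp [real_inner_eq_re_inner, inner_smul_right]
  have hn : (‖Ψ t‖ : ℂ) ≠ 0 := by simpa using h0
  rw [hre, inner_adjoint_sub_self_apply]
  simp only [← Complex.coe_smul, map_smul, inner_smul_left, inner_smul_right, Complex.conj_ofReal,
    Complex.im_ofReal_mul]
  match_scalars
  · linear_combination -(‖Ψ t‖ : ℂ)⁻¹ * Complex.I_sq
  · field_simp

/-- The normalized state `Ψ̂(t) = Ψ(t)/‖Ψ(t)‖`, with `Ψ(t) = exp(−itH)ψ₀` and `ψ₀ ≠ 0`,
is differentiable and satisfies the nonlinear Schrödinger equation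
`i dΨ̂/dt = H Ψ̂(t) + (1/2)⟨Ψ̂(t), (H† − H)Ψ̂(t)⟩ Ψ̂(t)`. -/
theorem normalized_state_nonlinear_schrodinger
    {E : Type*} [NormedAddCommGroup E] [InnerProductSpace ℂ E] [FiniteDimensional ℂ E]
    (H : E →L[ℂ] E) (ψ₀ : E) (hψ₀ : ψ₀ ≠ 0)
    (Ψ Ψhat : ℝ → E)
    (hΨ : ∀ t : ℝ, Ψ t = NormedSpace.exp (-(Complex.I * t) • H) ψ₀)
    (hΨhat : ∀ t : ℝ, Ψhat t = ‖Ψ t‖⁻¹ • Ψ t)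
    (t : ℝ) :
    ∃ d : E, HasDerivAt Ψhat d t ∧
      Complex.I • d
        = H (Ψhat t)
          + ((1 / 2 : ℂ) * (inner ℂ (Ψhat t) ((adjoint H - H) (Ψhat t)) : ℂ)) • Ψhat t := by
  have hΨ_eq : Ψ = fun s : ℝ => exp (s • (-Complex.I • H)) ψ₀ := by
    funext s
    rw [hΨ, ← Complex.coe_smul, smul_smul, mul_neg, mul_comm]
  have hΨ_deriv : HasDerivAt Ψ (-Complex.I • H (Ψ t)) t := by
    rw [hΨ_eq]
    exact hasDerivAt_exp_smul_apply (-Complex.I • H) ψ₀ t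
  have hΨ_ne : Ψ t ≠ 0 := hΨ t ▸ exp_apply_ne_zero _ hψ₀
  rw [funext hΨhat]
  exact exists_hasDerivAt_inv_norm_smul_of_schrodinger H hΨ_deriv hΨ_ne
end

section
/- Let H and X be continuous linear operators on a finite-dimensional complex inner product space E with H†X = XH, let ψ₀ ∈ E with ‖ψ₀‖ = 1, Ψ(t) = exp(−itH)ψ₀, and Ψ̂(t) = Ψ(t)/‖Ψ(t)‖. Then for all t ∈ ℝ, ⟨Ψ̂(t), X Ψ̂(t)⟩ = ⟨ψ₀, X ψ₀⟩ / ‖Ψ(t)‖²; equivalently, t ↦ ‖Ψ(t)‖² · ⟨Ψ̂(t), X Ψ̂(t)⟩ is constant. -/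
open ContinuousLinearMap NormedSpace

/-!
Taking adjoints, `exp (-itH)† = exp (itH†)`, and the intertwining relation `H†X = XH` passes to the
exponentials: `exp (itH†) X = X exp (itH)`. Hence `exp (-itH)† X exp (-itH) = X`, so the
unnormalised expectation `⟨Ψ(t), X Ψ(t)⟩` is conserved, and normalising `Ψ(t)` divides it by
`‖Ψ(t)‖²`.
-/

theorem star_exp_mul_mul_exp_eq_self {𝔸 : Type*} [NormedRing 𝔸] [NormedAlgebra ℚ 𝔸]
    [CompleteSpace 𝔸] [StarRing 𝔸] [ContinuousStar 𝔸] {x a : 𝔸}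
    (h : SemiconjBy x a (-star a)) : star (exp a) * x * exp a = x := by
  simpa [star_exp] using h.exp_neg_mul_mul_exp_eq_self

theorem inner_apply_map_apply_of_star_mul_mul_eq {𝕜 E : Type*} [RCLike 𝕜] [NormedAddCommGroup E]
    [InnerProductSpace 𝕜 E] [CompleteSpace E] {T X : E →L[𝕜] E} (h : star T * X * T = X) (ψ : E) :
    inner 𝕜 (T ψ) (X (T ψ)) = inner 𝕜 ψ (X ψ) := by
  rw [← adjoint_inner_right, ← star_eq_adjoint, ← mul_apply_eq_comp X T,
    ← mul_apply_eq_comp, ← mul_assoc, h]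

theorem inner_normalize_map_normalize {E : Type*} [NormedAddCommGroup E]
    [InnerProductSpace ℂ E] (X : E →ₗ[ℂ] E) (v : E) :
    inner ℂ (‖v‖⁻¹ • v) (X (‖v‖⁻¹ • v)) = inner ℂ v (X v) / ((‖v‖ ^ 2 : ℝ) : ℂ) := by
  simp only [LinearMap.map_smul_of_tower, ← Complex.coe_smul, inner_smul_left, inner_smul_right,
    Complex.conj_ofReal]
  push_cast
  ring

theorem norm_sq_mul_inner_normalize_map_normalize {E : Type*} [NormedAddCommGroup E]
    [InnerProductSpace ℂ E] (X : E →ₗ[ℂ] E) (v : E) :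
    ((‖v‖ ^ 2 : ℝ) : ℂ) * inner ℂ (‖v‖⁻¹ • v) (X (‖v‖⁻¹ • v)) = inner ℂ v (X v) := by
  rcases eq_or_ne v 0 with rfl | hv
  · simp
  · rw [inner_normalize_map_normalize, mul_div_cancel₀]
    exact_mod_cast pow_ne_zero 2 (norm_ne_zero_iff.2 hv)

theorem inner_exp_apply_map_exp_apply_of_adjoint_mul_eq_mul {E : Type*} [NormedAddCommGroup E]
    [InnerProductSpace ℂ E] [CompleteSpace E] {H X : E →L[ℂ] E} (hX : adjoint H * X = X * H)
    (t : ℝ) (ψ : E) :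
    inner ℂ (exp (-(Complex.I * t) • H) ψ) (X (exp (-(Complex.I * t) • H) ψ))
      = inner ℂ ψ (X ψ) := by
  -- `exp` does not depend on this instance: it sums the series over any `ℚ`-algebra structure.
  let _ : NormedAlgebra ℚ (E →L[ℂ] E) := .restrictScalars ℚ ℂ _
  refine inner_apply_map_apply_of_star_mul_mul_eq (star_exp_mul_mul_exp_eq_self ?_) ψ
  have : -star (-(Complex.I * t) • H) = -(Complex.I * t) • adjoint H := by
    simp [star_smul, star_eq_adjoint, Complex.conj_ofReal]
  rw [this]
  exact (show SemiconjBy X H (adjoint H) from hX.symm).smul_right _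

theorem gamma_symmetry_mean_value_decay_general
    {E : Type*} [NormedAddCommGroup E] [InnerProductSpace ℂ E] [FiniteDimensional ℂ E]
    (H X : E →L[ℂ] E) (hX : adjoint H * X = X * H)
    (ψ₀ : E)
    (Ψ Ψhat : ℝ → E)
    (hΨ : ∀ t : ℝ, Ψ t = exp (-(Complex.I * t) • H) ψ₀)
    (hΨhat : ∀ t : ℝ, Ψhat t = ‖Ψ t‖⁻¹ • Ψ t) :
    (∀ t : ℝ, (inner ℂ (Ψhat t) (X (Ψhat t)) : ℂ)
        = (inner ℂ ψ₀ (X ψ₀) : ℂ) / ((‖Ψ t‖ ^ 2 : ℝ) : ℂ)) ∧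
    (∀ t : ℝ, ((‖Ψ t‖ ^ 2 : ℝ) : ℂ) * (inner ℂ (Ψhat t) (X (Ψhat t)) : ℂ)
        = (inner ℂ ψ₀ (X ψ₀) : ℂ)) := by
  have hconserved (t : ℝ) : inner ℂ (Ψ t) (X (Ψ t)) = inner ℂ ψ₀ (X ψ₀) := by
    rw [hΨ]
    exact inner_exp_apply_map_exp_apply_of_adjoint_mul_eq_mul hX t ψ₀
  refine ⟨fun t => ?_, fun t => ?_⟩
  · rw [hΨhat, ← hconserved]
    exact inner_normalize_map_normalize (X : E →ₗ[ℂ] E) (Ψ t)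
  · rw [hΨhat, ← hconserved]
    exact norm_sq_mul_inner_normalize_map_normalize (X : E →ₗ[ℂ] E) (Ψ t)

/-- If `H†X = XH` and `‖ψ₀‖ = 1`, then for all `t`,
`⟨Ψ̂(t), X Ψ̂(t)⟩ = ⟨ψ₀, X ψ₀⟩ / ‖Ψ(t)‖²`; equivalently,
`t ↦ ‖Ψ(t)‖² ⟨Ψ̂(t), X Ψ̂(t)⟩` is constant. -/
theorem gamma_symmetry_mean_value_decay
    {E : Type*} [NormedAddCommGroup E] [InnerProductSpace ℂ E] [FiniteDimensional ℂ E]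
    (H X : E →L[ℂ] E) (hX : adjoint H * X = X * H)
    (ψ₀ : E) (hψ₀ : ‖ψ₀‖ = 1)
    (Ψ Ψhat : ℝ → E)
    (hΨ : ∀ t : ℝ, Ψ t = exp (-(Complex.I * t) • H) ψ₀)
    (hΨhat : ∀ t : ℝ, Ψhat t = ‖Ψ t‖⁻¹ • Ψ t) :
    (∀ t : ℝ, (inner ℂ (Ψhat t) (X (Ψhat t)) : ℂ)
        = (inner ℂ ψ₀ (X ψ₀) : ℂ) / ((‖Ψ t‖ ^ 2 : ℝ) : ℂ)) ∧
    (∀ t : ℝ, ((‖Ψ t‖ ^ 2 : ℝ) : ℂ) * (inner ℂ (Ψhat t) (X (Ψhat t)) : ℂ)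
        = (inner ℂ ψ₀ (X ψ₀) : ℂ)) :=
  gamma_symmetry_mean_value_decay_general H X hX ψ₀ Ψ Ψhat hΨ hΨhat
end

section
/- Let H be a continuous linear operator on a finite-dimensional complex inner product space E, ψ₀ ∈ E nonzero, Ψ(t) = exp(−itH)ψ₀, Ψ̂(t) = Ψ(t)/‖Ψ(t)‖, and define δ_Ψ̂(A;t) = i(H†A − AH) − i⟨Ψ̂(t), (H† − H)Ψ̂(t)⟩ · A. If a continuous linear operator X satisfies δ_Ψ̂(X;t) = 0 for all t ∈ ℝ, then each of the operators X†, H†X, XH, X†H and H†X† also satisfies δ_Ψ̂(·;t) = 0 for all t ∈ ℝ. -/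
/-!
Write `c t = ⟪Ψ̂ t, (H† - H) Ψ̂ t⟫`. Since `i ≠ 0`, `δ_Ψ̂(A;t) = 0` says exactly
`H†A - AH = c t • A`. This relation survives left multiplication by `H†` and right
multiplication by `H`, and, because `H† - H` is skew-adjoint and hence `c t` is purely
imaginary, also taking adjoints.
-/

open ContinuousLinearMap NormedSpace

section

variable {𝕜 R : Type*} [CommRing 𝕜] [Ring R] [Algebra 𝕜 R] {a x : R} {c : 𝕜}

theorem star_mul_sub_mul_eq_smul_star [StarRing 𝕜] [StarRing R] [StarModule 𝕜 R]
    (h : star a * x - x * a = c • x) (hc : star c = -c) :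
    star a * star x - star x * a = c • star x := by
  have h' := congrArg star h
  rw [star_sub, star_mul, star_mul, star_star, star_smul, hc, neg_smul] at h'
  rw [← neg_sub, h', neg_neg]

theorem star_mul_sub_mul_eq_smul_star_mul [Star R] (h : star a * x - x * a = c • x) :
    star a * (star a * x) - star a * x * a = c • (star a * x) := by
  rw [mul_assoc, ← mul_sub, h, mul_smul_comm]

theorem star_mul_sub_mul_eq_smul_mul [Star R] (h : star a * x - x * a = c • x) :
    star a * (x * a) - x * a * a = c • (x * a) := by
  rw [← mul_assoc, ← sub_mul, h, smul_mul_assoc]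

end

theorem star_inner_adjoint_sub_self_apply_self {𝕜 E : Type*} [RCLike 𝕜] [NormedAddCommGroup E]
    [InnerProductSpace 𝕜 E] [CompleteSpace E] (H : E →L[𝕜] E) (x : E) :
    star (inner 𝕜 x ((adjoint H - H) x)) = -inner 𝕜 x ((adjoint H - H) x) := by
  have hskew : adjoint (adjoint H - H) = -(adjoint H - H) := by
    rw [map_sub, adjoint_adjoint, neg_sub]
  rw [RCLike.star_def, inner_conj_symm, ← adjoint_inner_right, hskew, neg_apply, inner_neg_right]

theorem psi_hat_integrals_of_motion_closure_general
    {E : Type*} [NormedAddCommGroup E] [InnerProductSpace ℂ E] [FiniteDimensional ℂ E]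
    (H : E →L[ℂ] E)
    (Ψhat : ℝ → E)
    (δ : (E →L[ℂ] E) → ℝ → (E →L[ℂ] E))
    (hδ : ∀ (A : E →L[ℂ] E) (t : ℝ),
      δ A t = Complex.I • (adjoint H * A - A * H)
        - (Complex.I * (inner ℂ (Ψhat t) ((adjoint H - H) (Ψhat t)) : ℂ)) • A)
    (X : E →L[ℂ] E) (hX : ∀ t : ℝ, δ X t = 0) :
    (∀ t : ℝ, δ (adjoint X) t = 0) ∧
    (∀ t : ℝ, δ (adjoint H * X) t = 0) ∧
    (∀ t : ℝ, δ (X * H) t = 0) ∧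
    (∀ t : ℝ, δ (adjoint X * H) t = 0) ∧
    (∀ t : ℝ, δ (adjoint H * adjoint X) t = 0) := by
  set c : ℝ → ℂ := fun t => inner ℂ (Ψhat t) ((adjoint H - H) (Ψhat t))
  have hc (t : ℝ) : star (c t) = -c t := star_inner_adjoint_sub_self_apply_self H (Ψhat t)
  have hδ_eq_zero (A : E →L[ℂ] E) (t : ℝ) :
      δ A t = 0 ↔ star H * A - A * H = c t • A := by
    rw [hδ, mul_smul, ← smul_sub, smul_eq_zero, sub_eq_zero, star_eq_adjoint]
    exact or_iff_right Complex.I_ne_zero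
  simp only [hδ_eq_zero, ← star_eq_adjoint] at hX ⊢
  exact ⟨fun t => star_mul_sub_mul_eq_smul_star (hX t) (hc t),
    fun t => star_mul_sub_mul_eq_smul_star_mul (hX t),
    fun t => star_mul_sub_mul_eq_smul_mul (hX t),
    fun t => star_mul_sub_mul_eq_smul_mul (star_mul_sub_mul_eq_smul_star (hX t) (hc t)),
    fun t => star_mul_sub_mul_eq_smul_star_mul (star_mul_sub_mul_eq_smul_star (hX t) (hc t))⟩

/-- If `X` is a Ψ̂-integral of motion (`δ_Ψ̂(X;t) = 0` for all `t`), then so are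
`X†`, `H†X`, `XH`, `X†H` and `H†X†`. -/
theorem psi_hat_integrals_of_motion_closure
    {E : Type*} [NormedAddCommGroup E] [InnerProductSpace ℂ E] [FiniteDimensional ℂ E]
    (H : E →L[ℂ] E) (ψ₀ : E) (hψ₀ : ψ₀ ≠ 0)
    (Ψ Ψhat : ℝ → E)
    (hΨ : ∀ t : ℝ, Ψ t = exp (-(Complex.I * t) • H) ψ₀)
    (hΨhat : ∀ t : ℝ, Ψhat t = ‖Ψ t‖⁻¹ • Ψ t)
    (δ : (E →L[ℂ] E) → ℝ → (E →L[ℂ] E))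
    (hδ : ∀ (A : E →L[ℂ] E) (t : ℝ),
      δ A t = Complex.I • (adjoint H * A - A * H)
        - (Complex.I * (inner ℂ (Ψhat t) ((adjoint H - H) (Ψhat t)) : ℂ)) • A)
    (X : E →L[ℂ] E) (hX : ∀ t : ℝ, δ X t = 0) :
    (∀ t : ℝ, δ (adjoint X) t = 0) ∧
    (∀ t : ℝ, δ (adjoint H * X) t = 0) ∧
    (∀ t : ℝ, δ (X * H) t = 0) ∧
    (∀ t : ℝ, δ (adjoint X * H) t = 0) ∧
    (∀ t : ℝ, δ (adjoint H * adjoint X) t = 0) :=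
  psi_hat_integrals_of_motion_closure_general H Ψhat δ hδ X hX
end

section
/- Let H be a continuous linear operator on a finite-dimensional complex inner product space E, and let φ ∈ E with ‖φ‖ = 1 and Hφ = Eφ for some E ∈ ℂ (not necessarily real). Take ψ₀ = φ, Ψ(t) = exp(−itH)ψ₀, Ψ̂(t) = Ψ(t)/‖Ψ(t)‖, and define δ_Ψ̂(X;t) = i(H†X − XH) − i⟨Ψ̂(t), (H† − H)Ψ̂(t)⟩ · X. Then ⟨Ψ̂(t), (H† − H)Ψ̂(t)⟩ = −2i·Im(E) for all t, so that δ_Ψ̂(X;t) = i(H†X − XH) − 2·Im(E)·X for every continuous linear operator X and every t ∈ ℝ; in particular δ_Ψ̂(X;t) is independent of t. -/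
/-!
Since `φ` is an eigenvector of `H` with eigenvalue `E₀`, the evolution only rescales it:
`Ψ(t) = exp(-i t E₀) φ`. Hence `Ψ̂(t)` is again a unit eigenvector with eigenvalue `E₀`, and for a
unit eigenvector `v` one has `⟨v, (H† − H) v⟩ = conj E₀ − E₀ = −2i·Im(E₀)`.
-/

open ContinuousLinearMap NormedSpace

open scoped ComplexConjugate

section Eigenvector

variable {𝕜 E : Type*} [RCLike 𝕜]

theorem exp_apply_of_apply_eq_smul [NormedAddCommGroup E] [NormedSpace 𝕜 E] [CompleteSpace E]
    (A : E →L[𝕜] E) {v : E} {c : 𝕜} (h : A v = c • v) : exp A v = exp c • v := by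
  have hpow : ∀ n : ℕ, (A ^ n) v = c ^ n • v := by
    intro n
    induction n with
    | zero => simp
    | succ n ih => rw [pow_succ, mul_apply_eq_comp, h, map_smul, ih, smul_smul, pow_succ']
  calc exp A v = ∑' n : ℕ, ((n.factorial : 𝕜)⁻¹ • A ^ n) v := by
        rw [exp_eq_tsum 𝕜]
        exact ((expSeries_summable' A).hasSum.mapL (apply 𝕜 E v)).tsum_eq.symm
    _ = ∑' n : ℕ, ((n.factorial : 𝕜)⁻¹ • c ^ n) • v := by
        simp only [smul_apply, hpow, smul_smul, smul_eq_mul]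
    _ = exp c • v := by rw [(expSeries_summable' c).tsum_smul_const, exp_eq_tsum 𝕜]

theorem inner_adjoint_sub_self_apply_of_apply_eq_smul [NormedAddCommGroup E]
    [InnerProductSpace 𝕜 E] [CompleteSpace E] (H : E →L[𝕜] E) {v : E} {μ : 𝕜}
    (h : H v = μ • v) : inner 𝕜 v ((adjoint H - H) v) = (conj μ - μ) * (‖v‖ : 𝕜) ^ 2 := by
  rw [sub_apply, inner_sub_right, adjoint_inner_right, h, inner_smul_left, inner_smul_right,
    inner_self_eq_norm_sq_to_K]
  ring

end Eigenvector

/-- If the initial state is a unit eigenvector `φ` of `H` with (possibly complex)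
eigenvalue `E₀`, then `⟨Ψ̂(t), (H† − H)Ψ̂(t)⟩ = −2i·Im(E₀)` for all `t`, so that
`δ_Ψ̂(X;t) = i(H†X − XH) − 2·Im(E₀)·X` for every operator `X` and every `t`;
in particular `δ_Ψ̂(X;t)` is independent of `t`. -/
theorem delta_psi_hat_eigenvector_case
    {E : Type*} [NormedAddCommGroup E] [InnerProductSpace ℂ E] [FiniteDimensional ℂ E]
    (H : E →L[ℂ] E) (φ : E) (E₀ : ℂ) (hφ : ‖φ‖ = 1) (hHφ : H φ = E₀ • φ)
    (ψ₀ : E) (hψ₀ : ψ₀ = φ)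
    (Ψ Ψhat : ℝ → E)
    (hΨ : ∀ t : ℝ, Ψ t = exp (-(Complex.I * t) • H) ψ₀)
    (hΨhat : ∀ t : ℝ, Ψhat t = ‖Ψ t‖⁻¹ • Ψ t)
    (δ : (E →L[ℂ] E) → ℝ → (E →L[ℂ] E))
    (hδ : ∀ (A : E →L[ℂ] E) (t : ℝ),
      δ A t = Complex.I • (adjoint H * A - A * H)
        - (Complex.I * (inner ℂ (Ψhat t) ((adjoint H - H) (Ψhat t)) : ℂ)) • A) :
    (∀ t : ℝ, (inner ℂ (Ψhat t) ((adjoint H - H) (Ψhat t)) : ℂ)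
        = -2 * Complex.I * (E₀.im : ℂ)) ∧
    (∀ (X : E →L[ℂ] E) (t : ℝ),
      δ X t = Complex.I • (adjoint H * X - X * H) - (2 * E₀.im : ℝ) • X) := by
  have hexpect : ∀ t : ℝ, (inner ℂ (Ψhat t) ((adjoint H - H) (Ψhat t)) : ℂ)
      = -2 * Complex.I * (E₀.im : ℂ) := by
    intro t
    have hΨt : Ψ t = Complex.exp (-(Complex.I * t) * E₀) • φ := by
      rw [hΨ, hψ₀, Complex.exp_eq_exp_ℂ]
      exact exp_apply_of_apply_eq_smul _ (by rw [smul_apply, hHφ, smul_smul])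
    have hΨt_ne : Ψ t ≠ 0 := by
      rw [hΨt]
      exact smul_ne_zero (Complex.exp_ne_zero _) (norm_ne_zero_iff.mp (hφ ▸ one_ne_zero))
    have hunit : ‖Ψhat t‖ = 1 := by rw [hΨhat]; exact norm_smul_inv_norm hΨt_ne
    have heig : H (Ψhat t) = E₀ • Ψhat t := by
      rw [hΨhat, hΨt, map_smul_of_tower, map_smul, hHφ, smul_comm E₀, smul_comm E₀]
    rw [inner_adjoint_sub_self_apply_of_apply_eq_smul H heig, hunit, ← neg_sub, Complex.sub_conj]
    push_cast
    ring
  refine ⟨hexpect, fun X t => ?_⟩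
  rw [hδ, hexpect, ← Complex.coe_smul]
  congr 2
  push_cast
  linear_combination (-2 * (E₀.im : ℂ)) * Complex.I_sq
end
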